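/- arXiv:2107.01176 — 2 statements merged into one kernel-verified Lean document; each statement's English description precedes it below -/
import Mathlib

section
/- Let Ḣ ⪯ H̄ be real symmetric n×n matrices, Ĥ := (H̄+Ḣ)/2 and H̃ := H̄ − Ḣ, and let a, b ∈ ℝⁿ. Then the set { aᵀHb : H real symmetric, Ḣ ⪯ H ⪯ H̄ } has least element aᵀĤb − ½‖a‖_H̃‖b‖_H̃ and greatest element aᵀĤb + ½‖a‖_H̃‖b‖_H̃ (both values are attained by matrices in the interval). -/
/-! For `Ḣ ⪯ H ⪯ H̄` put `P := H̄ - H` and `Q := H - Ḣ`: both are positive semidefinite,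
`P + Q = H̃` and `2 aᵀ(H - Ĥ)b = aᵀQb - aᵀPb`. Cauchy–Schwarz for the forms of `Q` and `P`,
and then in `ℝ²`, bounds this by `‖a‖_H̃ ‖b‖_H̃`. The bound is attained at
`H = Ḣ + H̃w (wᵀH̃w)⁻¹ wᵀH̃` with `w = ‖b‖_H̃ a ± ‖a‖_H̃ b`: this rank-one matrix lies below `H̃`
by Cauchy–Schwarz for `H̃`, and `w` bisects `a` and `±b` in the geometry of `H̃`. -/

namespace Matrix

variable {ι : Type*} [Fintype ι]

lemma IsSymm.dotProduct_mulVec_comm {M : Matrix ι ι ℝ} (hM : M.IsSymm) (x y : ι → ℝ) :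
    x ⬝ᵥ M *ᵥ y = y ⬝ᵥ M *ᵥ x := by
  rw [dotProduct_mulVec, ← mulVec_transpose, hM.eq, dotProduct_comm]

namespace PosSemidef

variable {M : Matrix ι ι ℝ}

omit [Fintype ι] in
lemma isSymm (hM : M.PosSemidef) : M.IsSymm := isHermitian_iff_isSymm.mp hM.isHermitian

lemma dotProduct_mulVec_self_nonneg (hM : M.PosSemidef) (x : ι → ℝ) :
    0 ≤ x ⬝ᵥ M *ᵥ x := by
  simpa using hM.dotProduct_mulVec_nonneg x

lemma dotProduct_mulVec_sq_le (hM : M.PosSemidef) (x y : ι → ℝ) :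
    (x ⬝ᵥ M *ᵥ y) ^ 2 ≤ (x ⬝ᵥ M *ᵥ x) * (y ⬝ᵥ M *ᵥ y) := by
  classical
  have := LinearMap.BilinForm.apply_mul_apply_le_of_forall_zero_le (toLinearMap₂' ℝ M)
    (by simpa only [toLinearMap₂'_apply'] using hM.dotProduct_mulVec_self_nonneg) x y
  simpa only [toLinearMap₂'_apply', hM.isSymm.dotProduct_mulVec_comm y x, ← sq] using this

lemma abs_dotProduct_mulVec_le (hM : M.PosSemidef) (x y : ι → ℝ) :
    |x ⬝ᵥ M *ᵥ y| ≤ √(x ⬝ᵥ M *ᵥ x) * √(y ⬝ᵥ M *ᵥ y) := by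
  rw [← Real.sqrt_mul (hM.dotProduct_mulVec_self_nonneg x)]
  exact Real.abs_le_sqrt (hM.dotProduct_mulVec_sq_le x y)

end PosSemidef

lemma abs_dotProduct_sub_mulVec_le {P Q : Matrix ι ι ℝ} (hP : P.PosSemidef) (hQ : Q.PosSemidef)
    (x y : ι → ℝ) :
    |x ⬝ᵥ (Q - P) *ᵥ y| ≤ √(x ⬝ᵥ (P + Q) *ᵥ x) * √(y ⬝ᵥ (P + Q) *ᵥ y) := by
  have hsum := Real.sum_sqrt_mul_sqrt_le Finset.univ (f := ![x ⬝ᵥ Q *ᵥ x, x ⬝ᵥ P *ᵥ x])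
    (g := ![y ⬝ᵥ Q *ᵥ y, y ⬝ᵥ P *ᵥ y])
    (by simp [Fin.forall_fin_two, hQ.dotProduct_mulVec_self_nonneg,
      hP.dotProduct_mulVec_self_nonneg])
    (by simp [Fin.forall_fin_two, hQ.dotProduct_mulVec_self_nonneg,
      hP.dotProduct_mulVec_self_nonneg])
  simp only [Fin.sum_univ_two, cons_val_zero, cons_val_one] at hsum
  rw [sub_mulVec, dotProduct_sub, add_mulVec, add_mulVec, dotProduct_add, dotProduct_add,
    add_comm (x ⬝ᵥ P *ᵥ x), add_comm (y ⬝ᵥ P *ᵥ y)]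
  calc |x ⬝ᵥ Q *ᵥ y - x ⬝ᵥ P *ᵥ y| ≤ |x ⬝ᵥ Q *ᵥ y| + |x ⬝ᵥ P *ᵥ y| := abs_sub _ _
    _ ≤ √(x ⬝ᵥ Q *ᵥ x) * √(y ⬝ᵥ Q *ᵥ y) + √(x ⬝ᵥ P *ᵥ x) * √(y ⬝ᵥ P *ᵥ y) :=
      add_le_add (hQ.abs_dotProduct_mulVec_le x y) (hP.abs_dotProduct_mulVec_le x y)
    _ ≤ _ := hsum

-- For `wᵀMw = 0` this is `0`, since `0⁻¹ = 0`.
noncomputable def rankOneMinorant (M : Matrix ι ι ℝ) (w : ι → ℝ) : Matrix ι ι ℝ :=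
  (w ⬝ᵥ M *ᵥ w)⁻¹ • vecMulVec (M *ᵥ w) (M *ᵥ w)

section rankOneMinorant

variable {M : Matrix ι ι ℝ}

lemma dotProduct_rankOneMinorant_mulVec (hM : M.IsSymm) (w x y : ι → ℝ) :
    x ⬝ᵥ rankOneMinorant M w *ᵥ y = (x ⬝ᵥ M *ᵥ w) * (w ⬝ᵥ M *ᵥ y) / (w ⬝ᵥ M *ᵥ w) := by
  simp only [rankOneMinorant, smul_mulVec, vecMulVec_mulVec, dotProduct_smul, smul_eq_mul,
    op_smul_eq_mul]
  rw [dotProduct_comm (M *ᵥ w), hM.dotProduct_mulVec_comm y w]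
  ring

lemma posSemidef_rankOneMinorant (hM : M.PosSemidef) (w : ι → ℝ) :
    (rankOneMinorant M w).PosSemidef := by
  have := posSemidef_vecMulVec_self_star (M *ᵥ w)
  rw [star_trivial] at this
  exact this.smul (inv_nonneg.mpr (hM.dotProduct_mulVec_self_nonneg w))

lemma posSemidef_sub_rankOneMinorant (hM : M.PosSemidef) (w : ι → ℝ) :
    (M - rankOneMinorant M w).PosSemidef := by
  refine .of_dotProduct_mulVec_nonneg
    (hM.isHermitian.sub (posSemidef_rankOneMinorant hM w).isHermitian) fun x => ?_
  rw [star_trivial, sub_mulVec, dotProduct_sub, dotProduct_rankOneMinorant_mulVec hM.isSymm,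
    hM.isSymm.dotProduct_mulVec_comm w x, ← sq, sub_nonneg]
  exact div_le_of_le_mul₀ (hM.dotProduct_mulVec_self_nonneg w)
    (hM.dotProduct_mulVec_self_nonneg x) (hM.dotProduct_mulVec_sq_le x w)

end rankOneMinorant

lemma PosSemidef.dotProduct_rankOneMinorant_bisector_mulVec {M : Matrix ι ι ℝ}
    (hM : M.PosSemidef) (a b : ι → ℝ) :
    a ⬝ᵥ rankOneMinorant M (√(b ⬝ᵥ M *ᵥ b) • a + √(a ⬝ᵥ M *ᵥ a) • b) *ᵥ b =
      (√(a ⬝ᵥ M *ᵥ a) * √(b ⬝ᵥ M *ᵥ b) + a ⬝ᵥ M *ᵥ b) / 2 := by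
  set α := √(a ⬝ᵥ M *ᵥ a)
  set β := √(b ⬝ᵥ M *ᵥ b)
  set d := a ⬝ᵥ M *ᵥ b
  have hα : α ^ 2 = a ⬝ᵥ M *ᵥ a := Real.sq_sqrt (hM.dotProduct_mulVec_self_nonneg a)
  have hβ : β ^ 2 = b ⬝ᵥ M *ᵥ b := Real.sq_sqrt (hM.dotProduct_mulVec_self_nonneg b)
  have hba : b ⬝ᵥ M *ᵥ a = d := hM.isSymm.dotProduct_mulVec_comm b a
  have hd : |d| ≤ α * β := hM.abs_dotProduct_mulVec_le a b
  rw [dotProduct_rankOneMinorant_mulVec hM.isSymm]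
  simp only [mulVec_add, mulVec_smul, dotProduct_add, add_dotProduct, dotProduct_smul,
    smul_dotProduct, smul_eq_mul, hba, ← hα, ← hβ]
  calc _ = α * β * (α * β + d) ^ 2 / (2 * (α * β) * (α * β + d)) := by congr 1 <;> ring
    _ = (α * β + d) / 2 := by
      rcases eq_or_ne (α * β + d) 0 with hsum | hsum
      · simp [hsum]
      have hαβ : α * β ≠ 0 := by
        intro h
        rw [h] at hd
        exact hsum (by rw [h, abs_nonpos_iff.mp hd, add_zero])
      rw [div_eq_div_iff (mul_ne_zero (mul_ne_zero two_ne_zero hαβ) hsum) two_ne_zero]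
      ring

variable {Hlo Hhi : Matrix ι ι ℝ}

lemma abs_dotProduct_mulVec_sub_midpoint_le {H : Matrix ι ι ℝ} (hlo : (H - Hlo).PosSemidef)
    (hhi : (Hhi - H).PosSemidef) (a b : ι → ℝ) :
    |a ⬝ᵥ H *ᵥ b - a ⬝ᵥ ((2 : ℝ)⁻¹ • (Hhi + Hlo)) *ᵥ b| ≤
      1 / 2 * √(a ⬝ᵥ (Hhi - Hlo) *ᵥ a) * √(b ⬝ᵥ (Hhi - Hlo) *ᵥ b) := by
  have h := abs_dotProduct_sub_mulVec_le hhi hlo a b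
  rw [sub_add_sub_cancel] at h
  have hmid : a ⬝ᵥ (H - Hlo - (Hhi - H)) *ᵥ b =
      2 * (a ⬝ᵥ H *ᵥ b - a ⬝ᵥ ((2 : ℝ)⁻¹ • (Hhi + Hlo)) *ᵥ b) := by
    simp only [sub_mulVec, add_mulVec, smul_mulVec, dotProduct_sub, dotProduct_add,
      dotProduct_smul, smul_eq_mul]
    ring
  rw [hmid, abs_mul, abs_two] at h
  linarith

lemma exists_dotProduct_mulVec_eq_midpoint_add (hHlo : Hlo.IsSymm) (hle : (Hhi - Hlo).PosSemidef)
    (a b : ι → ℝ) :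
    ∃ H : Matrix ι ι ℝ, H.IsSymm ∧ (H - Hlo).PosSemidef ∧ (Hhi - H).PosSemidef ∧
      a ⬝ᵥ H *ᵥ b = a ⬝ᵥ ((2 : ℝ)⁻¹ • (Hhi + Hlo)) *ᵥ b +
        1 / 2 * √(a ⬝ᵥ (Hhi - Hlo) *ᵥ a) * √(b ⬝ᵥ (Hhi - Hlo) *ᵥ b) := by
  set w := √(b ⬝ᵥ (Hhi - Hlo) *ᵥ b) • a + √(a ⬝ᵥ (Hhi - Hlo) *ᵥ a) • b
  have hN := posSemidef_rankOneMinorant hle w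
  refine ⟨Hlo + rankOneMinorant (Hhi - Hlo) w, hHlo.add hN.isSymm, by rwa [add_sub_cancel_left],
    by rw [← sub_sub]; exact posSemidef_sub_rankOneMinorant hle w, ?_⟩
  rw [add_mulVec, dotProduct_add, hle.dotProduct_rankOneMinorant_bisector_mulVec]
  simp only [sub_mulVec, add_mulVec, smul_mulVec, dotProduct_sub, dotProduct_add,
    dotProduct_smul, smul_eq_mul]
  ring

lemma exists_dotProduct_mulVec_eq_midpoint_sub (hHlo : Hlo.IsSymm) (hle : (Hhi - Hlo).PosSemidef)
    (a b : ι → ℝ) :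
    ∃ H : Matrix ι ι ℝ, H.IsSymm ∧ (H - Hlo).PosSemidef ∧ (Hhi - H).PosSemidef ∧
      a ⬝ᵥ H *ᵥ b = a ⬝ᵥ ((2 : ℝ)⁻¹ • (Hhi + Hlo)) *ᵥ b -
        1 / 2 * √(a ⬝ᵥ (Hhi - Hlo) *ᵥ a) * √(b ⬝ᵥ (Hhi - Hlo) *ᵥ b) := by
  obtain ⟨H, hH, hlo, hhi, hval⟩ := exists_dotProduct_mulVec_eq_midpoint_add hHlo hle a (-b)
  refine ⟨H, hH, hlo, hhi, ?_⟩
  simp only [mulVec_neg, dotProduct_neg, neg_dotProduct, neg_neg] at hval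
  linarith

end Matrix

open Matrix

theorem stmt_5_general {n : ℕ} (Hlo Hhi : Matrix (Fin n) (Fin n) ℝ)
    (hHlo : Hlo.IsSymm)
    (hle : (Hhi - Hlo).PosSemidef)
    (a b : Fin n → ℝ) :
    IsLeast {x : ℝ | ∃ H : Matrix (Fin n) (Fin n) ℝ, H.IsSymm ∧
        (H - Hlo).PosSemidef ∧ (Hhi - H).PosSemidef ∧ x = a ⬝ᵥ H.mulVec b}
      (a ⬝ᵥ (((2 : ℝ)⁻¹ • (Hhi + Hlo)).mulVec b)
        - (1 / 2) * Real.sqrt (a ⬝ᵥ (Hhi - Hlo).mulVec a)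
            * Real.sqrt (b ⬝ᵥ (Hhi - Hlo).mulVec b)) ∧
    IsGreatest {x : ℝ | ∃ H : Matrix (Fin n) (Fin n) ℝ, H.IsSymm ∧
        (H - Hlo).PosSemidef ∧ (Hhi - H).PosSemidef ∧ x = a ⬝ᵥ H.mulVec b}
      (a ⬝ᵥ (((2 : ℝ)⁻¹ • (Hhi + Hlo)).mulVec b)
        + (1 / 2) * Real.sqrt (a ⬝ᵥ (Hhi - Hlo).mulVec a)
            * Real.sqrt (b ⬝ᵥ (Hhi - Hlo).mulVec b)) := by
  refine ⟨⟨?_, ?_⟩, ⟨?_, ?_⟩⟩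
  · obtain ⟨H, hH, hlo, hhi, hval⟩ := exists_dotProduct_mulVec_eq_midpoint_sub hHlo hle a b
    exact ⟨H, hH, hlo, hhi, hval.symm⟩
  · rintro x ⟨H, -, hlo, hhi, rfl⟩
    linarith [(abs_le.mp (abs_dotProduct_mulVec_sub_midpoint_le hlo hhi a b)).1]
  · obtain ⟨H, hH, hlo, hhi, hval⟩ := exists_dotProduct_mulVec_eq_midpoint_add hHlo hle a b
    exact ⟨H, hH, hlo, hhi, hval.symm⟩
  · rintro x ⟨H, -, hlo, hhi, rfl⟩
    linarith [(abs_le.mp (abs_dotProduct_mulVec_sub_midpoint_le hlo hhi a b)).2]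

/-- For symmetric `Ḣ ⪯ H̄`, `Ĥ := (H̄+Ḣ)/2`, `H̃ := H̄−Ḣ` and `a, b ∈ ℝⁿ`,
the set `{aᵀHb : H symmetric, Ḣ ⪯ H ⪯ H̄}` has least element `aᵀĤb − ½‖a‖_H̃‖b‖_H̃` and
greatest element `aᵀĤb + ½‖a‖_H̃‖b‖_H̃`. -/
theorem stmt_5 {n : ℕ} (Hlo Hhi : Matrix (Fin n) (Fin n) ℝ)
    (hHlo : Hlo.IsSymm) (hHhi : Hhi.IsSymm)
    (hle : (Hhi - Hlo).PosSemidef)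
    (a b : Fin n → ℝ) :
    IsLeast {x : ℝ | ∃ H : Matrix (Fin n) (Fin n) ℝ, H.IsSymm ∧
        (H - Hlo).PosSemidef ∧ (Hhi - H).PosSemidef ∧ x = a ⬝ᵥ H.mulVec b}
      (a ⬝ᵥ (((2 : ℝ)⁻¹ • (Hhi + Hlo)).mulVec b)
        - (1 / 2) * Real.sqrt (a ⬝ᵥ (Hhi - Hlo).mulVec a)
            * Real.sqrt (b ⬝ᵥ (Hhi - Hlo).mulVec b)) ∧
    IsGreatest {x : ℝ | ∃ H : Matrix (Fin n) (Fin n) ℝ, H.IsSymm ∧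
        (H - Hlo).PosSemidef ∧ (Hhi - H).PosSemidef ∧ x = a ⬝ᵥ H.mulVec b}
      (a ⬝ᵥ (((2 : ℝ)⁻¹ • (Hhi + Hlo)).mulVec b)
        + (1 / 2) * Real.sqrt (a ⬝ᵥ (Hhi - Hlo).mulVec a)
            * Real.sqrt (b ⬝ᵥ (Hhi - Hlo).mulVec b)) :=
  stmt_5_general Hlo Hhi hHlo hle a b
end

section
/- Let J : ℝⁿ → ℝ be twice continuously differentiable with Hessian upper bound ∇²J ⪯ H̄, let K be a real symmetric positive definite n×n matrix and γ ∈ ℝ such that K − K(H̄ + γI)K is positive semidefinite. Fix r, θ̂ ∈ ℝⁿ with θ̂ᵀKθ̂ > 0, let θ := ∇J(r) and θ̃ := θ̂ − θ, and let α ∈ ℝ satisfy 0 ≤ α and α ≤ 1 − (θ̃ᵀKθ̂)/(θ̂ᵀKθ̂). Then J(r − αKθ̂) − J(r) ≤ −½ α² θ̂ᵀKθ̂ − (γ/2) α² ‖Kθ̂‖². -/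
open Matrix
open scoped RealInnerProductSpace

/-!
With `u = Kθ̂` and the step `d = -αu`, the second-order Taylor bound along the segment gives
`J(r + d) ≤ J(r) - α θᵀu + (α²/2) uᵀH̄u`. The gain condition evaluated at `θ̂` bounds the curvature
term, `uᵀH̄u + γ‖u‖² ≤ θ̂ᵀu`, and the step-size condition is exactly `α θ̂ᵀu ≤ θᵀu`, so the
first-order decrease `α θᵀu ≥ α² θ̂ᵀu` outweighs the curvature.
-/

theorem le_add_deriv_add_half_of_deriv2_le {g g' g'' : ℝ → ℝ} {M : ℝ}
    (hg : ∀ t, HasDerivAt g (g' t) t) (hg' : ∀ t, HasDerivAt g' (g'' t) t)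
    (hM : ∀ t, g'' t ≤ M) :
    g 1 ≤ g 0 + g' 0 + M / 2 := by
  have hslope : Monotone fun t => g' 0 + M * t - g' t :=
    monotone_of_hasDerivAt_nonneg (f' := fun t => M - g'' t)
      (fun t => (mul_one M ▸ ((hasDerivAt_id' t).const_mul M).const_add (g' 0)).sub (hg' t))
      (fun t => sub_nonneg.2 (hM t))
  have hgap : MonotoneOn (fun t => g 0 + g' 0 * t + M / 2 * t ^ 2 - g t) (Set.Ici 0) := by
    have hderiv : ∀ t, HasDerivAt (fun t => g 0 + g' 0 * t + M / 2 * t ^ 2 - g t)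
        (g' 0 + M * t - g' t) t := fun t => by
      refine ((((hasDerivAt_id' t).const_mul (g' 0)).const_add (g 0)).add
        ((hasDerivAt_pow 2 t).const_mul (M / 2))).sub (hg t) |>.congr_deriv ?_
      norm_num
      ring
    refine monotoneOn_of_hasDerivWithinAt_nonneg (convex_Ici 0)
      (fun t _ => (hderiv t).continuousAt.continuousWithinAt)
      (fun t _ => (hderiv t).hasDerivWithinAt) fun t ht => ?_
    rw [interior_Ici] at ht
    simpa using hslope (le_of_lt ht)
  have := hgap Set.self_mem_Ici (Set.mem_Ici.2 zero_le_one) zero_le_one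
  norm_num at this
  linarith

theorem ContDiff.le_add_fderiv_add_half {E : Type*} [NormedAddCommGroup E] [NormedSpace ℝ E]
    {f : E → ℝ} (hf : ContDiff ℝ 2 f) (x d : E) {M : ℝ}
    (hM : ∀ z, iteratedFDeriv ℝ 2 f z ![d, d] ≤ M) :
    f (x + d) ≤ f x + fderiv ℝ f x d + M / 2 := by
  have hline : ∀ t : ℝ, HasDerivAt (fun t : ℝ => x + t • d) d t := fun t => by
    simpa using ((hasDerivAt_id t).smul_const d).const_add x
  have hf₂ : Differentiable ℝ (fderiv ℝ f) :=
    (hf.fderiv_right (m := 1) le_rfl).differentiable one_ne_zero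
  have := le_add_deriv_add_half_of_deriv2_le (g := fun t => f (x + t • d))
    (g' := fun t => fderiv ℝ f (x + t • d) d)
    (g'' := fun t => fderiv ℝ (fderiv ℝ f) (x + t • d) d d)
    (fun t => ((hf.differentiable two_ne_zero) _).hasFDerivAt.comp_hasDerivAt t (hline t))
    (fun t => by
      simpa using ((hf₂ _).hasFDerivAt.comp_hasDerivAt t (hline t)).clm_apply (hasDerivAt_const t d))
    (fun t => by simpa [iteratedFDeriv_two_apply] using hM (x + t • d))
  simpa using this

theorem EuclideanSpace.fderiv_apply_eq_gradient_dotProduct {ι : Type*} [Fintype ι]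
    (f : EuclideanSpace ℝ ι → ℝ) (x d : EuclideanSpace ℝ ι) :
    fderiv ℝ f x d = (gradient f x).ofLp ⬝ᵥ d.ofLp := by
  rw [← inner_gradient_left, EuclideanSpace.inner_eq_star_dotProduct, star_trivial, dotProduct_comm]

theorem Matrix.PosSemidef.mulVec_dotProduct_mulVec_le {ι : Type*} [Fintype ι]
    {K A : Matrix ι ι ℝ} (hK : K.IsSymm) (h : (K - K * A * K).PosSemidef) (v : ι → ℝ) :
    K *ᵥ v ⬝ᵥ A *ᵥ (K *ᵥ v) ≤ v ⬝ᵥ K *ᵥ v := by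
  have hquad := h.dotProduct_mulVec_nonneg v
  rw [star_trivial, sub_mulVec, dotProduct_sub, ← mulVec_mulVec, ← mulVec_mulVec,
    dotProduct_mulVec v K (A *ᵥ (K *ᵥ v)), ← mulVec_transpose, hK.eq] at hquad
  linarith

theorem stmt_10_general {n : ℕ} (J : EuclideanSpace ℝ (Fin n) → ℝ)
    (Hhi : Matrix (Fin n) (Fin n) ℝ)
    (hJ : ContDiff ℝ 2 J)
    (hhigh : ∀ z v : EuclideanSpace ℝ (Fin n),
      iteratedFDeriv ℝ 2 J z ![v, v] ≤ v ⬝ᵥ Hhi.mulVec v)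
    (K : Matrix (Fin n) (Fin n) ℝ) (hK : K.PosDef) (γ : ℝ)
    (hgain : (K - K * (Hhi + γ • (1 : Matrix (Fin n) (Fin n) ℝ)) * K).PosSemidef)
    (r θhat : EuclideanSpace ℝ (Fin n))
    (hpos : 0 < θhat ⬝ᵥ K.mulVec θhat)
    (θ θtil : EuclideanSpace ℝ (Fin n))
    (hθ : θ = gradient J r) (hθtil : θtil = θhat - θ)
    (α : ℝ) (hα0 : 0 ≤ α)
    (hα1 : α ≤ 1 - (θtil ⬝ᵥ K.mulVec θhat) / (θhat ⬝ᵥ K.mulVec θhat)) :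
    J (Sub.sub r (WithLp.toLp 2 (α • K.mulVec θhat))) - J r
      ≤ -(1 / 2) * α ^ 2 * (θhat ⬝ᵥ K.mulVec θhat)
        - (γ / 2) * α ^ 2 * (K.mulVec θhat ⬝ᵥ K.mulVec θhat) := by
  set u := K *ᵥ θhat
  set S := θhat ⬝ᵥ u
  have hstep : α * S ≤ θ ⬝ᵥ u := by
    have h := mul_le_mul_of_nonneg_right hα1 hpos.le
    rw [sub_mul, one_mul, div_mul_cancel₀ _ hpos.ne', hθtil, WithLp.ofLp_sub, sub_dotProduct] at h
    linarith
  have hcurv : u ⬝ᵥ Hhi *ᵥ u + γ * (u ⬝ᵥ u) ≤ S := by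
    have h := hgain.mulVec_dotProduct_mulVec_le (isHermitian_iff_isSymm.1 hK.isHermitian) θhat
    rwa [add_mulVec, smul_mulVec, one_mulVec, dotProduct_add, dotProduct_smul, smul_eq_mul] at h
  have htaylor := hJ.le_add_fderiv_add_half r (-WithLp.toLp 2 (α • u)) (hhigh · _)
  rw [EuclideanSpace.fderiv_apply_eq_gradient_dotProduct, ← hθ] at htaylor
  simp only [WithLp.ofLp_neg, mulVec_neg, mulVec_smul, dotProduct_neg, neg_dotProduct,
    dotProduct_smul, smul_dotProduct, smul_eq_mul] at htaylor
  rw [show Sub.sub r (WithLp.toLp 2 (α • u)) = r + -WithLp.toLp 2 (α • u) from sub_eq_add_neg _ _]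
  nlinarith [mul_le_mul_of_nonneg_left hstep hα0]

/-- core of the paper's Corollary 2: with `∇²J ⪯ H̄`, gain condition
`K − K(H̄+γI)K ⪰ 0`, `θ̂ᵀKθ̂ > 0`, `θ := ∇J(r)`, `θ̃ := θ̂ − θ`, and step-size
`0 ≤ α ≤ 1 − θ̃ᵀKθ̂/θ̂ᵀKθ̂`: `J(r − αKθ̂) − J(r) ≤ −½α²θ̂ᵀKθ̂ − (γ/2)α²‖Kθ̂‖²`. -/
theorem stmt_10 {n : ℕ} (J : EuclideanSpace ℝ (Fin n) → ℝ)
    (Hhi : Matrix (Fin n) (Fin n) ℝ) (hHhi : Hhi.IsSymm)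
    (hJ : ContDiff ℝ 2 J)
    (hhigh : ∀ z v : EuclideanSpace ℝ (Fin n),
      iteratedFDeriv ℝ 2 J z ![v, v] ≤ v ⬝ᵥ Hhi.mulVec v)
    (K : Matrix (Fin n) (Fin n) ℝ) (hK : K.PosDef) (γ : ℝ)
    (hgain : (K - K * (Hhi + γ • (1 : Matrix (Fin n) (Fin n) ℝ)) * K).PosSemidef)
    (r θhat : EuclideanSpace ℝ (Fin n))
    (hpos : 0 < θhat ⬝ᵥ K.mulVec θhat)
    (θ θtil : EuclideanSpace ℝ (Fin n))
    (hθ : θ = gradient J r) (hθtil : θtil = θhat - θ)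
    (α : ℝ) (hα0 : 0 ≤ α)
    (hα1 : α ≤ 1 - (θtil ⬝ᵥ K.mulVec θhat) / (θhat ⬝ᵥ K.mulVec θhat)) :
    J (Sub.sub r (WithLp.toLp 2 (α • K.mulVec θhat))) - J r
      ≤ -(1 / 2) * α ^ 2 * (θhat ⬝ᵥ K.mulVec θhat)
        - (γ / 2) * α ^ 2 * (K.mulVec θhat ⬝ᵥ K.mulVec θhat) :=
  stmt_10_general J Hhi hJ hhigh K hK γ hgain r θhat hpos θ θtil hθ hθtil α hα0 hα1
end
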